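/- arXiv:2512.01325 — 5 statements merged into one kernel-verified Lean document; each statement's English description precedes it below -/
import Mathlib

section
/- Let Γ be a countable discrete group that is non-amenable, i.e., Γ admits no left-invariant mean. Then there exist a finite subset B ⊆ Γ and a real number δ > 0 such that for every finite subset K ⊆ Γ one has |BK \ K| ≥ δ·|K|, where BK = {b·k : b ∈ B, k ∈ K}. -/
open Pointwise BoundedContinuousFunction Filter

/-- If a countable discrete group `Γ` is non-amenable, i.e. admits no
left-invariant mean on the space `Γ →ᵇ ℝ` of bounded (real-valued) functions on `Γ`,
then there are a finite subset `B ⊆ Γ` and `δ > 0` such that `|BK \ K| ≥ δ|K|`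
for every finite `K ⊆ Γ`. -/
theorem stmt0 {Γ : Type*} [Group Γ] [Countable Γ] [DecidableEq Γ]
    [TopologicalSpace Γ] [DiscreteTopology Γ]
    (hna : ¬ ∃ m : (Γ →ᵇ ℝ) →ₗ[ℝ] ℝ,
        (∀ f : Γ →ᵇ ℝ, (∀ x, 0 ≤ f x) → 0 ≤ m f) ∧
        m 1 = 1 ∧
        ∀ (γ : Γ) (f : Γ →ᵇ ℝ),
          m (f.compContinuous ⟨fun x => γ⁻¹ * x, continuous_of_discreteTopology⟩) = m f) :
    ∃ (B : Finset Γ) (δ : ℝ), 0 < δ ∧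
      ∀ K : Finset Γ, δ * K.card ≤ (((B * K) \ K).card : ℝ) := by
  by_contra h
  apply hna
  push_neg at h
  -- enumerate the group
  obtain ⟨e, he⟩ := exists_surjective_nat Γ
  set Bn : ℕ → Finset Γ := fun n => (Finset.range (n+1)).image e with hBn
  -- choose almost-invariant finite sets
  choose K hK using fun n => h (Bn n) (1/((n:ℝ)+1)) (by positivity)
  have hKpos : ∀ n, 0 < ((K n).card : ℝ) := by
    intro n
    by_contra hc
    push_neg at hc
    have h0 : ((K n).card : ℝ) = 0 := le_antisymm hc (by positivity)
    have := hK n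
    rw [h0, mul_zero] at this
    exact absurd this (not_lt.mpr (Nat.cast_nonneg _))
  -- the averaging functionals
  set μ : ℕ → (Γ →ᵇ ℝ) → ℝ := fun n f => (∑ x ∈ K n, f x) / ((K n).card : ℝ) with hμ
  have μbound : ∀ n (f : Γ →ᵇ ℝ), |μ n f| ≤ ‖f‖ := by
    intro n f
    rw [hμ]
    simp only
    rw [abs_div, abs_of_pos (hKpos n), div_le_iff₀ (hKpos n)]
    calc |∑ x ∈ K n, f x| ≤ ∑ x ∈ K n, |f x| := Finset.abs_sum_le_sum_abs _ _
      _ ≤ ∑ _x ∈ K n, ‖f‖ := Finset.sum_le_sum fun x _ => f.norm_coe_le_norm x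
      _ = ‖f‖ * (K n).card := by rw [Finset.sum_const, nsmul_eq_mul, mul_comm]
  -- the ultrafilter
  set U : Ultrafilter ℕ := Filter.hyperfilter ℕ with hU
  have hUat : (U : Filter ℕ) ≤ atTop := by
    rw [← Nat.cofinite_eq_atTop]; exact Filter.hyperfilter_le_cofinite
  -- existence of limits along U
  have hex : ∀ f : Γ →ᵇ ℝ, ∃ x, Tendsto (fun n => μ n f) U (nhds x) := by
    intro f
    have hc : IsCompact (Set.Icc (-‖f‖) ‖f‖) := isCompact_Icc
    obtain ⟨x, _, hx⟩ := hc.ultrafilter_le_nhds (U.map (fun n => μ n f)) (by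
      rw [Ultrafilter.coe_map, le_principal_iff, Filter.mem_map]
      filter_upwards with n
      exact abs_le.mp (μbound n f))
    exact ⟨x, hx⟩
  set m0 : (Γ →ᵇ ℝ) → ℝ := fun f => limUnder U (fun n => μ n f) with hm0
  have hT : ∀ f : Γ →ᵇ ℝ, Tendsto (fun n => μ n f) U (nhds (m0 f)) := fun f =>
    tendsto_nhds_limUnder (hex f)
  have hNB : (U : Filter ℕ).NeBot := Ultrafilter.neBot U
  -- linearity
  have hadd : ∀ f g : Γ →ᵇ ℝ, m0 (f + g) = m0 f + m0 g := by
    intro f g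
    refine tendsto_nhds_unique (hT (f + g)) ?_
    have : (fun n => μ n (f + g)) = fun n => μ n f + μ n g := by
      funext n
      rw [hμ]
      simp only [BoundedContinuousFunction.coe_add, Pi.add_apply, Finset.sum_add_distrib]
      ring
    rw [this]
    exact (hT f).add (hT g)
  have hsmul : ∀ (c : ℝ) (f : Γ →ᵇ ℝ), m0 (c • f) = c * m0 f := by
    intro c f
    refine tendsto_nhds_unique (hT (c • f)) ?_
    have : (fun n => μ n (c • f)) = fun n => c * μ n f := by
      funext n
      rw [hμ]
      simp only [BoundedContinuousFunction.coe_smul, Pi.smul_apply, smul_eq_mul,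
        ← Finset.mul_sum]
      ring
    rw [this]
    exact (hT f).const_mul c
  refine ⟨{ toFun := m0, map_add' := hadd, map_smul' := hsmul }, ?_, ?_, ?_⟩
  · -- positivity
    intro f hf
    refine ge_of_tendsto' (hT f) fun n => ?_
    rw [hμ]
    simp only
    apply div_nonneg _ (le_of_lt (hKpos n))
    exact Finset.sum_nonneg fun x _ => hf x
  · -- normalization
    have h1 : Tendsto (fun n => μ n 1) (U : Filter ℕ) (nhds 1) := by
      have : (fun n => μ n 1) = fun _ => (1 : ℝ) := by
        funext n
        rw [hμ]
        simp only [BoundedContinuousFunction.coe_one, Pi.one_apply, Finset.sum_const,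
          nsmul_eq_mul, mul_one]
        exact div_self (ne_of_gt (hKpos n))
      rw [this]
      exact tendsto_const_nhds
    exact tendsto_nhds_unique (hT 1) h1
  · -- invariance
    intro γ f
    set g : Γ →ᵇ ℝ := f.compContinuous ⟨fun x => γ⁻¹ * x, continuous_of_discreteTopology⟩
      with hg
    obtain ⟨k, hk⟩ := he γ⁻¹
    -- the translated sets
    set A : ℕ → Finset Γ := fun n => (K n).image (fun x => γ⁻¹ * x) with hA
    have hAcard : ∀ n, (A n).card = (K n).card := fun n =>
      Finset.card_image_of_injective _ (mul_right_injective γ⁻¹)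
    have hsd : ∀ n, ((K n) \ (A n)).card = ((A n) \ (K n)).card := by
      intro n
      have h1 := Finset.card_sdiff_add_card_inter (K n) (A n)
      have h2 := Finset.card_sdiff_add_card_inter (A n) (K n)
      rw [Finset.inter_comm] at h2
      have h3 := hAcard n
      omega
    -- eventual bound on the difference of the averages
    have hdiffbd : ∀ n ≥ k, |μ n g - μ n f| ≤ 2 * ‖f‖ * (1 / ((n:ℝ)+1)) := by
      intro n hn
      have hsub : (A n) \ (K n) ⊆ ((Bn n) * (K n)) \ (K n) := by
        intro y hy
        rw [Finset.mem_sdiff] at hy ⊢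
        refine ⟨?_, hy.2⟩
        obtain ⟨x, hx, rfl⟩ := Finset.mem_image.mp hy.1
        exact Finset.mem_mul.mpr ⟨γ⁻¹, by
          rw [hBn]; exact Finset.mem_image.mpr ⟨k, Finset.mem_range.mpr (by omega), hk⟩,
          x, hx, rfl⟩
      have hcardAK : (((A n) \ (K n)).card : ℝ) < (1/((n:ℝ)+1)) * (K n).card :=
        lt_of_le_of_lt (Nat.cast_le.mpr (Finset.card_le_card hsub)) (hK n)
      -- rewrite μ n g as a sum over A n
      have hμg : μ n g = (∑ y ∈ A n, f y) / ((K n).card : ℝ) := by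
        rw [hμ, hA]
        simp only
        congr 1
        rw [Finset.sum_image (fun x _ y _ hxy => mul_right_injective γ⁻¹ hxy)]
        apply Finset.sum_congr rfl
        intro x _
        rw [hg, BoundedContinuousFunction.compContinuous_apply]
        rfl
      have hdiff : μ n g - μ n f =
          ((∑ y ∈ (A n) \ (K n), f y) - ∑ y ∈ (K n) \ (A n), f y) / ((K n).card : ℝ) := by
        rw [hμg, hμ]
        simp only
        rw [div_sub_div_same, div_eq_div_iff (ne_of_gt (hKpos n)) (ne_of_gt (hKpos n))]
        have e1 := Finset.sum_inter_add_sum_sdiff (A n) (K n) (fun y => f y)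
        have e2 := Finset.sum_inter_add_sum_sdiff (K n) (A n) (fun y => f y)
        rw [Finset.inter_comm] at e2
        have : (∑ y ∈ A n, f y) - ∑ x ∈ K n, f x =
            (∑ y ∈ (A n) \ (K n), f y) - ∑ y ∈ (K n) \ (A n), f y := by
          rw [← e1, ← e2]; ring
        rw [this]
      rw [hdiff, abs_div, abs_of_pos (hKpos n), div_le_iff₀ (hKpos n)]
      have hb : ∀ S : Finset Γ, |∑ y ∈ S, f y| ≤ (S.card : ℝ) * ‖f‖ := by
        intro S
        calc |∑ y ∈ S, f y| ≤ ∑ y ∈ S, |f y| := Finset.abs_sum_le_sum_abs _ _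
          _ ≤ ∑ _y ∈ S, ‖f‖ := Finset.sum_le_sum fun y _ => f.norm_coe_le_norm y
          _ = (S.card : ℝ) * ‖f‖ := by rw [Finset.sum_const, nsmul_eq_mul]
      calc |(∑ y ∈ (A n) \ (K n), f y) - ∑ y ∈ (K n) \ (A n), f y|
          ≤ |∑ y ∈ (A n) \ (K n), f y| + |∑ y ∈ (K n) \ (A n), f y| := abs_sub _ _
        _ ≤ (((A n) \ (K n)).card : ℝ) * ‖f‖ + (((K n) \ (A n)).card : ℝ) * ‖f‖ :=
            add_le_add (hb _) (hb _)
        _ = 2 * ‖f‖ * (((A n) \ (K n)).card : ℝ) := by rw [hsd n]; ring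
        _ ≤ 2 * ‖f‖ * ((1/((n:ℝ)+1)) * (K n).card) := by
            apply mul_le_mul_of_nonneg_left (le_of_lt hcardAK) (by positivity)
        _ = 2 * ‖f‖ * (1/((n:ℝ)+1)) * (K n).card := by ring
    -- the difference tends to 0 along atTop, hence along U
    have hdiff0 : Tendsto (fun n => μ n g - μ n f) atTop (nhds 0) := by
      have hb1 : ∀ᶠ n in atTop, ‖μ n g - μ n f‖ ≤ 2 * ‖f‖ * (1/((n:ℝ)+1)) := by
        filter_upwards [eventually_ge_atTop k] with n hn
        exact hdiffbd n hn
      have hb2 : Tendsto (fun n : ℕ => 2 * ‖f‖ * (1/((n:ℝ)+1))) atTop (nhds 0) := by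
        have := tendsto_one_div_add_atTop_nhds_zero_nat.const_mul (2 * ‖f‖)
        simpa [mul_comm] using this
      exact squeeze_zero_norm' hb1 hb2
    have hdiffU : Tendsto (fun n => μ n g - μ n f) U (nhds 0) :=
      hdiff0.mono_left hUat
    have hTg : Tendsto (fun n => μ n g) U (nhds (m0 f)) := by
      have : (fun n => μ n g) = fun n => μ n f + (μ n g - μ n f) := by
        funext n; ring
      rw [this]
      simpa using (hT f).add hdiffU
    exact tendsto_nhds_unique (hT g) hTg
end

section
/- Let Γ be a group acting freely on a set X (i.e., γ • x = x for some x ∈ X implies γ = 1). Let B ⊆ Γ be a finite subset and δ > 0 a real number such that for every finite subset K' ⊆ Γ one has |BK' \ K'| ≥ δ·|K'|, where BK' = {b·k : b ∈ B, k ∈ K'}. Then for every finite subset K ⊆ X one has |B·K \ K| ≥ δ·|K|, where B·K = {b • x : b ∈ B, x ∈ K}. -/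
open Pointwise

/-- If `Γ` acts freely on `X` and a finite `B ⊆ Γ` together with `δ > 0`
satisfies `|BK' \ K'| ≥ δ|K'|` for all finite `K' ⊆ Γ`, then `|B•K \ K| ≥ δ|K|` for
every finite `K ⊆ X`. -/
theorem stmt1 {Γ X : Type*} [Group Γ] [MulAction Γ X] [DecidableEq Γ] [DecidableEq X]
    (hfree : ∀ (γ : Γ) (x : X), γ • x = x → γ = 1)
    (B : Finset Γ) (δ : ℝ) (hδ : 0 < δ)
    (hB : ∀ K' : Finset Γ, δ * K'.card ≤ (((B * K') \ K').card : ℝ)) :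
    ∀ K : Finset X, δ * K.card ≤ (((B • K) \ K).card : ℝ) := by
  classical
  intro K
  induction K using Finset.strongInduction with
  | _ K ih =>
  rcases K.eq_empty_or_nonempty with rfl | ⟨x, hx⟩
  · simp
  have hinj : Function.Injective (fun γ : Γ => γ • x) := by
    intro a b hab
    simp only at hab
    have h1 : (b⁻¹ * a) • x = x := by rw [mul_smul, hab, inv_smul_smul]
    have h2 := hfree _ _ h1
    exact (inv_mul_eq_one.mp h2).symm
  set φ : Γ → X := fun γ : Γ => γ • x with hφ
  set K₁ := K.filter (fun y => y ∈ MulAction.orbit Γ x) with hK₁def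
  set K₂ := K.filter (fun y => y ∉ MulAction.orbit Γ x) with hK₂def
  have hK₁sub : ∀ y ∈ K₁, y ∈ MulAction.orbit Γ x := by
    intro y hy; exact (Finset.mem_filter.mp hy).2
  have hKsplit : K = K₁ ∪ K₂ := by
    rw [hK₁def, hK₂def, ← Finset.filter_or]
    simp [Finset.filter_true_of_mem, em]
  have hdisj : Disjoint K₁ K₂ := by
    rw [hK₁def, hK₂def]
    exact Finset.disjoint_filter_filter_not K K _
  -- orbit part: pull K₁ back to Γ
  set K' := K₁.preimage φ hinj.injOn with hK'def
  have himg : K'.image φ = K₁ := by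
    ext y
    simp only [Finset.mem_image, Finset.mem_preimage, hK'def]
    constructor
    · rintro ⟨γ, hγ, rfl⟩; exact hγ
    · intro hy
      obtain ⟨g, hg⟩ := MulAction.mem_orbit_iff.mp (hK₁sub y hy)
      exact ⟨g, by rw [hφ]; simpa [hg] using hy, hg⟩
  have hsmul_img : (B * K').image φ = B • K₁ := by
    rw [← himg]
    ext z
    simp only [Finset.mem_image, Finset.mem_smul, Finset.mem_mul]
    constructor
    · rintro ⟨g, ⟨b, hb, γ, hγ, rfl⟩, rfl⟩
      exact ⟨b, hb, γ • x, ⟨γ, hγ, rfl⟩, (mul_smul b γ x).symm⟩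
    · rintro ⟨b, hb, _, ⟨γ, hγ, rfl⟩, rfl⟩
      exact ⟨b * γ, ⟨b, hb, γ, hγ, rfl⟩, mul_smul b γ x⟩
  have hcard1 : δ * (K₁.card : ℝ) ≤ (((B • K₁) \ K₁).card : ℝ) := by
    have hsd : ((B * K') \ K').image φ = (B • K₁) \ K₁ := by
      rw [Finset.image_sdiff _ _ hinj, hsmul_img, himg]
    have hc1 : ((B * K') \ K').card = ((B • K₁) \ K₁).card := by
      rw [← hsd, Finset.card_image_of_injective _ hinj]
    have hc2 : K'.card = K₁.card := by
      rw [← himg, Finset.card_image_of_injective _ hinj]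
    calc δ * (K₁.card : ℝ) = δ * (K'.card : ℝ) := by rw [hc2]
      _ ≤ (((B * K') \ K').card : ℝ) := hB K'
      _ = _ := by rw [hc1]
  -- induction on K₂
  have hxK₁ : x ∈ K₁ := by
    rw [hK₁def, Finset.mem_filter]
    exact ⟨hx, MulAction.mem_orbit_self x⟩
  have hK₂ss : K₂ ⊂ K := by
    constructor
    · rw [hK₂def]; exact Finset.filter_subset _ _
    · intro h
      have := Finset.mem_filter.mp (h hx)
      exact this.2 (MulAction.mem_orbit_self x)
  have hcard2 : δ * (K₂.card : ℝ) ≤ (((B • K₂) \ K₂).card : ℝ) := ih K₂ hK₂ss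
  -- orbit membership facts
  have hBK₁orb : ∀ z ∈ (B • K₁), z ∈ MulAction.orbit Γ x := by
    intro z hz
    obtain ⟨b, hb, y, hy, rfl⟩ := Finset.mem_smul.mp hz
    obtain ⟨g, hg⟩ := MulAction.mem_orbit_iff.mp (hK₁sub y hy)
    exact MulAction.mem_orbit_iff.mpr ⟨b * g, by rw [mul_smul, hg]⟩
  have hBK₂orb : ∀ z ∈ (B • K₂), z ∉ MulAction.orbit Γ x := by
    intro z hz hzorb
    obtain ⟨b, hb, y, hy, rfl⟩ := Finset.mem_smul.mp hz
    obtain ⟨g, hg⟩ := MulAction.mem_orbit_iff.mp hzorb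
    have : y ∈ MulAction.orbit Γ x :=
      MulAction.mem_orbit_iff.mpr ⟨b⁻¹ * g, by rw [mul_smul, hg, inv_smul_smul]⟩
    exact (Finset.mem_filter.mp hy).2 this
  -- containment and disjointness
  have hsubset : ((B • K₁) \ K₁) ∪ ((B • K₂) \ K₂) ⊆ (B • K) \ K := by
    intro z hz
    rw [Finset.mem_union] at hz
    rw [Finset.mem_sdiff]
    rcases hz with hz | hz
    · obtain ⟨hz1, hz2⟩ := Finset.mem_sdiff.mp hz
      constructor
      · rw [hKsplit, Finset.smul_union, Finset.mem_union]; left; exact hz1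
      · rw [hKsplit, Finset.mem_union]
        rintro (h | h)
        · exact hz2 h
        · exact (Finset.mem_filter.mp h).2 (hBK₁orb z hz1)
    · obtain ⟨hz1, hz2⟩ := Finset.mem_sdiff.mp hz
      constructor
      · rw [hKsplit, Finset.smul_union, Finset.mem_union]; right; exact hz1
      · rw [hKsplit, Finset.mem_union]
        rintro (h | h)
        · exact hBK₂orb z hz1 (Finset.mem_filter.mp h).2
        · exact hz2 h
  have hdisj2 : Disjoint ((B • K₁) \ K₁) ((B • K₂) \ K₂) := by
    rw [Finset.disjoint_left]
    intro z hz1 hz2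
    exact hBK₂orb z (Finset.mem_sdiff.mp hz2).1 (hBK₁orb z (Finset.mem_sdiff.mp hz1).1)
  have hcardsum : ((B • K₁) \ K₁).card + ((B • K₂) \ K₂).card ≤ ((B • K) \ K).card := by
    rw [← Finset.card_union_of_disjoint hdisj2]
    exact Finset.card_le_card hsubset
  have hKcard : (K.card : ℝ) = K₁.card + K₂.card := by
    rw [hKsplit, Finset.card_union_of_disjoint hdisj]; push_cast; ring
  calc δ * (K.card : ℝ) = δ * K₁.card + δ * K₂.card := by rw [hKcard]; ring
    _ ≤ (((B • K₁) \ K₁).card : ℝ) + (((B • K₂) \ K₂).card : ℝ) := add_le_add hcard1 hcard2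
    _ ≤ (((B • K) \ K).card : ℝ) := by exact_mod_cast hcardsum
end

section
/- Let Γ be a countable discrete group that is non-amenable, i.e., Γ admits no left-invariant mean, and suppose Γ acts freely on a set X (i.e., γ • x = x for some x ∈ X implies γ = 1). Then there exist a finite subset B ⊆ Γ and a real number δ > 0 such that for every finite subset K ⊆ X one has |B·K \ K| ≥ δ·|K|, where B·K = {b • x : b ∈ B, x ∈ K}. -/
open Pointwise BoundedContinuousFunction

section Aux
variable {Γ X : Type*} [Group Γ] [MulAction Γ X]

noncomputable def myRep (Γ : Type*) [Group Γ] [MulAction Γ X] (x : X) : X :=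
  (Quotient.mk (MulAction.orbitRel Γ X) x).out

lemma myRep_smul (g : Γ) (x : X) : myRep Γ (g • x) = myRep Γ x := by
  unfold myRep
  congr 1
  exact Quotient.sound ⟨g, rfl⟩

lemma exists_phi (x : X) : ∃ γ : Γ, γ • myRep Γ x = x := by
  have h := Quotient.mk_out (s := MulAction.orbitRel Γ X) x
  obtain ⟨g, hg⟩ := h
  refine ⟨g⁻¹, ?_⟩
  have hx : myRep Γ x = g • x := hg.symm
  rw [hx, inv_smul_smul]

noncomputable def phi (Γ : Type*) [Group Γ] [MulAction Γ X] (x : X) : Γ :=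
  (exists_phi (Γ := Γ) x).choose

lemma phi_spec (x : X) : phi Γ x • myRep Γ x = x := (exists_phi x).choose_spec

lemma phi_smul (hfree : ∀ (γ : Γ) (x : X), γ • x = x → γ = 1) (g : Γ) (x : X) :
    phi Γ (g • x) = g * phi Γ x := by
  have h1 : phi Γ (g • x) • myRep Γ x = g • x := by
    rw [← myRep_smul g x]; exact phi_spec (g • x)
  have h2 : (g * phi Γ x) • myRep Γ x = g • x := by
    rw [mul_smul, phi_spec]
  have h3 : ((g * phi Γ x)⁻¹ * phi Γ (g • x)) • myRep Γ x = myRep Γ x := by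
    rw [mul_smul, h1, ← h2, inv_smul_smul]
  exact (inv_mul_eq_one.mp (hfree _ _ h3)).symm

end Aux

/-- If a countable discrete group `Γ` is non-amenable (admits no
left-invariant mean on the bounded real-valued functions on `Γ`) and `Γ` acts freely
on a set `X`, then there are a finite `B ⊆ Γ` and `δ > 0` with `|B•K \ K| ≥ δ|K|`
for every finite `K ⊆ X`. -/
theorem stmt2 {Γ X : Type*} [Group Γ] [Countable Γ] [DecidableEq Γ] [DecidableEq X]
    [TopologicalSpace Γ] [DiscreteTopology Γ] [MulAction Γ X]
    (hna : ¬ ∃ m : (Γ →ᵇ ℝ) →ₗ[ℝ] ℝ,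
        (∀ f : Γ →ᵇ ℝ, (∀ x, 0 ≤ f x) → 0 ≤ m f) ∧
        m 1 = 1 ∧
        ∀ (γ : Γ) (f : Γ →ᵇ ℝ),
          m (f.compContinuous ⟨fun x => γ⁻¹ * x, continuous_of_discreteTopology⟩) = m f)
    (hfree : ∀ (γ : Γ) (x : X), γ • x = x → γ = 1) :
    ∃ (B : Finset Γ) (δ : ℝ), 0 < δ ∧
      ∀ K : Finset X, δ * K.card ≤ (((B • K) \ K).card : ℝ) := by
  by_contra hcon
  push_neg at hcon
  apply hna
  -- enumerate the group
  obtain ⟨e, he⟩ := exists_surjective_nat Γ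
  -- Følner-like sets
  set B : ℕ → Finset Γ := fun n =>
    (Finset.range (n+1)).image e ∪ (Finset.range (n+1)).image (fun i => (e i)⁻¹) with hB
  have hKex : ∀ n : ℕ, ∃ K : Finset X,
      (((B n • K) \ K).card : ℝ) < (1 / (n+1)) * K.card := by
    intro n
    exact hcon (B n) (1/(n+1)) (by positivity)
  choose K hK using hKex
  have hKpos : ∀ n, 0 < ((K n).card : ℝ) := by
    intro n
    rcases lt_or_ge 0 ((K n).card : ℝ) with h | h
    · exact h
    · exfalso
      have h0 : ((K n).card : ℝ) = 0 := le_antisymm h (Nat.cast_nonneg _)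
      have hlt := hK n
      rw [h0, mul_zero] at hlt
      exact absurd hlt (not_lt.mpr (Nat.cast_nonneg _))
  -- the averaging sequence
  set A : (Γ →ᵇ ℝ) → ℕ → ℝ := fun f n => (∑ x ∈ K n, f (phi Γ x)) / (K n).card with hA
  have hAbound : ∀ (f : Γ →ᵇ ℝ) n, |A f n| ≤ ‖f‖ := by
    intro f n
    rw [hA]
    simp only
    rw [abs_div, abs_of_pos (hKpos n), div_le_iff₀ (hKpos n)]
    calc |∑ x ∈ K n, f (phi Γ x)| ≤ ∑ x ∈ K n, |f (phi Γ x)| := Finset.abs_sum_le_sum_abs _ _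
      _ ≤ ∑ _x ∈ K n, ‖f‖ := Finset.sum_le_sum (fun x _ => f.norm_coe_le_norm _)
      _ = ‖f‖ * (K n).card := by rw [Finset.sum_const, nsmul_eq_mul, mul_comm]
  -- ultrafilter
  set U : Ultrafilter ℕ := Ultrafilter.of Filter.atTop with hU
  have hUle : (U : Filter ℕ) ≤ Filter.atTop := Ultrafilter.of_le _
  have hlim : ∀ f : Γ →ᵇ ℝ, ∃ l : ℝ, Filter.Tendsto (A f) U (nhds l) := by
    intro f
    have hc : IsCompact (Set.Icc (-‖f‖) ‖f‖) := isCompact_Icc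
    have hmem : (↑(U.map (A f)) : Filter ℝ) ≤ Filter.principal (Set.Icc (-‖f‖) ‖f‖) := by
      have hmem' : ∀ n, A f n ∈ Set.Icc (-‖f‖) ‖f‖ := fun n => abs_le.mp (hAbound f n)
      rw [Ultrafilter.coe_map, Filter.le_principal_iff, Filter.mem_map]
      exact Filter.univ_mem' (fun n => hmem' n)
    obtain ⟨l, _, hl⟩ := hc.ultrafilter_le_nhds (U.map (A f)) hmem
    exact ⟨l, hl⟩
  choose mf hmf using hlim
  have huniq : ∀ (f : Γ →ᵇ ℝ) (l : ℝ), Filter.Tendsto (A f) U (nhds l) → mf f = l := by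
    intro f l hl
    exact tendsto_nhds_unique (hmf f) hl
  refine ⟨{ toFun := mf
            map_add' := ?_
            map_smul' := ?_ }, ?_, ?_, ?_⟩
  · intro f g
    refine huniq (f + g) (mf f + mf g) ?_
    have : A (f + g) = fun n => A f n + A g n := by
      funext n
      rw [hA]
      simp only [BoundedContinuousFunction.coe_add, Pi.add_apply, Finset.sum_add_distrib,
        add_div]
    rw [this]
    exact (hmf f).add (hmf g)
  · intro c f
    refine huniq (c • f) (c * mf f) ?_
    have : A (c • f) = fun n => c * A f n := by
      funext n
      rw [hA]
      simp only [BoundedContinuousFunction.coe_smul, Pi.smul_apply, smul_eq_mul,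
        ← Finset.mul_sum, mul_div_assoc]
    rw [this]
    exact (hmf f).const_mul c
  · -- positivity
    intro f hf
    refine ge_of_tendsto' (hmf f) (fun n => ?_)
    rw [hA]
    simp only
    apply div_nonneg _ (le_of_lt (hKpos n))
    exact Finset.sum_nonneg (fun x _ => hf _)
  · -- m 1 = 1
    refine huniq 1 1 ?_
    have : A 1 = fun _ => (1 : ℝ) := by
      funext n
      rw [hA]
      simp only [BoundedContinuousFunction.coe_one, Pi.one_apply, Finset.sum_const,
        nsmul_eq_mul, mul_one]
      exact div_self (ne_of_gt (hKpos n))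
    rw [this]
    exact tendsto_const_nhds
  · -- invariance
    intro γ f
    set g : Γ →ᵇ ℝ :=
      f.compContinuous ⟨fun x => γ⁻¹ * x, continuous_of_discreteTopology⟩ with hg
    refine huniq g (mf f) ?_
    have hgapp : ∀ y : Γ, g y = f (γ⁻¹ * y) := fun y => rfl
    -- rewrite A g n as a sum over γ⁻¹ • K n
    have hAg : ∀ n, A g n = (∑ x ∈ (γ⁻¹ • K n : Finset X), f (phi Γ x)) / (K n).card := by
      intro n
      rw [hA]
      simp only
      congr 1
      rw [show (γ⁻¹ • K n : Finset X) = (K n).image (fun x => γ⁻¹ • x) from rfl,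
        Finset.sum_image (fun x _ y _ h => MulAction.injective γ⁻¹ h)]
      refine Finset.sum_congr rfl (fun x _ => ?_)
      rw [hgapp, phi_smul hfree]
    -- the difference bound
    obtain ⟨n₀, hn₀⟩ := he γ
    have hdiff : ∀ n ≥ n₀, |A g n - A f n| ≤ (2 * ‖f‖) * (1/(n+1)) := by
      intro n hn
      have hγB : γ ∈ B n := by
        rw [hB]
        exact Finset.mem_union_left _ (Finset.mem_image.mpr
          ⟨n₀, Finset.mem_range.mpr (Nat.lt_succ_of_le hn), hn₀⟩)
      have hγiB : γ⁻¹ ∈ B n := by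
        rw [hB]
        exact Finset.mem_union_right _ (Finset.mem_image.mpr
          ⟨n₀, Finset.mem_range.mpr (Nat.lt_succ_of_le hn), by rw [hn₀]⟩)
      have h1 : ((γ⁻¹ • K n : Finset X) \ K n).card ≤ ((B n • K n) \ K n).card :=
        Finset.card_le_card (Finset.sdiff_subset_sdiff
          (Finset.smul_finset_subset_smul hγiB) le_rfl)
      have h2 : (K n \ (γ⁻¹ • K n : Finset X)).card ≤ ((B n • K n) \ K n).card := by
        have : (K n \ (γ⁻¹ • K n : Finset X)).card
            = ((γ • K n : Finset X) \ K n).card := by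
          rw [← Finset.card_smul_finset γ (K n \ (γ⁻¹ • K n : Finset X)),
            Finset.smul_finset_sdiff, smul_inv_smul]
        rw [this]
        exact Finset.card_le_card (Finset.sdiff_subset_sdiff
          (Finset.smul_finset_subset_smul hγB) le_rfl)
      have hsum : A g n - A f n
          = ((∑ x ∈ (γ⁻¹ • K n : Finset X) \ K n, f (phi Γ x))
            - ∑ x ∈ K n \ (γ⁻¹ • K n : Finset X), f (phi Γ x)) / (K n).card := by
        rw [hAg n, hA]
        simp only
        rw [div_sub_div_same, Finset.sum_sdiff_sub_sum_sdiff]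
      rw [hsum, abs_div, abs_of_pos (hKpos n), div_le_iff₀ (hKpos n)]
      have hb1 : |∑ x ∈ (γ⁻¹ • K n : Finset X) \ K n, f (phi Γ x)|
          ≤ ‖f‖ * (((B n • K n) \ K n).card : ℝ) := by
        calc |∑ x ∈ (γ⁻¹ • K n : Finset X) \ K n, f (phi Γ x)|
            ≤ ∑ x ∈ (γ⁻¹ • K n : Finset X) \ K n, |f (phi Γ x)| :=
              Finset.abs_sum_le_sum_abs _ _
          _ ≤ ∑ _x ∈ (γ⁻¹ • K n : Finset X) \ K n, ‖f‖ :=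
              Finset.sum_le_sum (fun x _ => f.norm_coe_le_norm _)
          _ = ‖f‖ * (((γ⁻¹ • K n : Finset X) \ K n).card : ℝ) := by
              rw [Finset.sum_const, nsmul_eq_mul, mul_comm]
          _ ≤ ‖f‖ * (((B n • K n) \ K n).card : ℝ) := by
              apply mul_le_mul_of_nonneg_left _ (norm_nonneg f)
              exact_mod_cast h1
      have hb2 : |∑ x ∈ K n \ (γ⁻¹ • K n : Finset X), f (phi Γ x)|
          ≤ ‖f‖ * (((B n • K n) \ K n).card : ℝ) := by
        calc |∑ x ∈ K n \ (γ⁻¹ • K n : Finset X), f (phi Γ x)|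
            ≤ ∑ x ∈ K n \ (γ⁻¹ • K n : Finset X), |f (phi Γ x)| :=
              Finset.abs_sum_le_sum_abs _ _
          _ ≤ ∑ _x ∈ K n \ (γ⁻¹ • K n : Finset X), ‖f‖ :=
              Finset.sum_le_sum (fun x _ => f.norm_coe_le_norm _)
          _ = ‖f‖ * ((K n \ (γ⁻¹ • K n : Finset X)).card : ℝ) := by
              rw [Finset.sum_const, nsmul_eq_mul, mul_comm]
          _ ≤ ‖f‖ * (((B n • K n) \ K n).card : ℝ) := by
              apply mul_le_mul_of_nonneg_left _ (norm_nonneg f)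
              exact_mod_cast h2
      have hBn := (hK n).le
      calc |(∑ x ∈ (γ⁻¹ • K n : Finset X) \ K n, f (phi Γ x))
            - ∑ x ∈ K n \ (γ⁻¹ • K n : Finset X), f (phi Γ x)|
          ≤ |∑ x ∈ (γ⁻¹ • K n : Finset X) \ K n, f (phi Γ x)|
            + |∑ x ∈ K n \ (γ⁻¹ • K n : Finset X), f (phi Γ x)| := abs_sub _ _
        _ ≤ 2 * ‖f‖ * (((B n • K n) \ K n).card : ℝ) := by linarith
        _ ≤ 2 * ‖f‖ * ((1/(n+1)) * ((K n).card : ℝ)) := by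
            apply mul_le_mul_of_nonneg_left hBn (by positivity)
        _ = 2 * ‖f‖ * (1/(n+1)) * ((K n).card : ℝ) := by ring
    -- conclude by squeeze along atTop, then restrict to U
    have htend0 : Filter.Tendsto (fun n => A g n - A f n) Filter.atTop (nhds 0) := by
      refine squeeze_zero_norm' (a := fun n : ℕ => (2 * ‖f‖) * (1/(n+1))) ?_ ?_
      · filter_upwards [Filter.eventually_ge_atTop n₀] with n hn
        simpa [Real.norm_eq_abs] using hdiff n hn
      · have := tendsto_one_div_add_atTop_nhds_zero_nat.const_mul (2 * ‖f‖)
        simpa using this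
    have htendU : Filter.Tendsto (fun n => A g n - A f n) U (nhds 0) :=
      htend0.mono_left hUle
    have : Filter.Tendsto (A g) U (nhds (0 + mf f)) := by
      have := htendU.add (hmf f)
      simpa using this
    simpa using this
end

section
/- Let Γ be a group and let (Γₙ)ₙ∈ℕ be a decreasing sequence of finite-index normal subgroups of Γ (Γₙ₊₁ ⊆ Γₙ for all n). Equip each finite quotient Γ⧸Γₙ with the discrete topology and ∏ₙ Γ⧸Γₙ with the product topology, and let L = { x ∈ ∏ₙ Γ⧸Γₙ : for every n, the canonical projection Γ⧸Γₙ₊₁ → Γ⧸Γₙ maps xₙ₊₁ to xₙ } be the inverse limit, with the subspace topology. Then for every x ∈ L, the orbit { γ • x : γ ∈ Γ } under the diagonal left-translation action of Γ is dense in L. -/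
/-- Let `(Γₙ)` be a decreasing sequence of finite-index normal subgroups
of `Γ`. Equip each finite quotient `Γ ⧸ Γₙ` with the discrete topology, the product
`∏ₙ Γ ⧸ Γₙ` with the product topology, and the inverse limit `L` (compatible sequences)
with the subspace topology. Then every `Γ`-orbit, under the diagonal left-translation
action, is dense in `L`. -/
theorem stmt4 {Γ : Type*} [Group Γ] (N : ℕ → Subgroup Γ) [∀ n, (N n).Normal]
    (hdec : ∀ n, N (n + 1) ≤ N n) (hfin : ∀ n, (N n).FiniteIndex) :
    letI : ∀ n, TopologicalSpace (Γ ⧸ N n) := fun _ => ⊥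
    ∀ x : {f : ∀ n, Γ ⧸ N n // ∀ n,
        QuotientGroup.map (N (n + 1)) (N n) (MonoidHom.id Γ)
          (by simpa using hdec n) (f (n + 1)) = f n},
      Dense {y : {f : ∀ n, Γ ⧸ N n // ∀ n,
          QuotientGroup.map (N (n + 1)) (N n) (MonoidHom.id Γ)
            (by simpa using hdec n) (f (n + 1)) = f n} |
        ∃ γ : Γ, ∀ n, y.1 n = γ • x.1 n} := by
  letI : ∀ n, TopologicalSpace (Γ ⧸ N n) := fun _ => ⊥
  intro x z
  -- map commutes with smul
  have hmap : ∀ (m : ℕ) (γ : Γ) (z : Γ ⧸ N (m+1)),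
      QuotientGroup.map (N (m+1)) (N m) (MonoidHom.id Γ) (by simpa using hdec m) (γ • z)
        = γ • QuotientGroup.map (N (m+1)) (N m) (MonoidHom.id Γ) (by simpa using hdec m) z := by
    intro m γ z
    obtain ⟨s, rfl⟩ := QuotientGroup.mk_surjective z
    rfl
  rw [mem_closure_iff_nhds]
  intro t ht
  rw [nhds_induced, Filter.mem_comap] at ht
  obtain ⟨u, hu, hut⟩ := ht
  haveI : ∀ n, DiscreteTopology (Γ ⧸ N n) := fun n => ⟨rfl⟩
  rw [nhds_pi] at hu
  simp only [nhds_discrete] at hu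
  obtain ⟨I, hIfin, ts, hts, hsub⟩ := Filter.mem_pi.mp hu
  obtain ⟨n, hn⟩ : ∃ n, ∀ i ∈ I, i ≤ n := by
    obtain ⟨n, hn⟩ := hIfin.bddAbove
    exact ⟨n, fun i hi => hn hi⟩
  obtain ⟨g, hg⟩ := QuotientGroup.mk_surjective (z.1 n)
  obtain ⟨h, hh⟩ := QuotientGroup.mk_surjective (x.1 n)
  set γ := g * h⁻¹ with hγ
  have key0 : z.1 n = γ • x.1 n := by
    rw [← hg, ← hh]
    show _ = QuotientGroup.mk (γ * h)
    rw [hγ]; group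
  have key : ∀ k m, m + k = n → z.1 m = γ • x.1 m := by
    intro k
    induction k with
    | zero =>
      intro m hm
      have hmn : m = n := by omega
      subst hmn; exact key0
    | succ k ih =>
      intro m hm
      have h1 : z.1 (m+1) = γ • x.1 (m+1) := ih (m+1) (by omega)
      have := z.2 m
      rw [h1, hmap, x.2 m] at this
      exact this.symm
  refine ⟨⟨fun m => γ • x.1 m, ?_⟩, ?_, γ, fun m => rfl⟩
  · intro m
    rw [hmap, x.2 m]
  · apply hut
    show _ ∈ u
    apply hsub
    intro i hi
    have hin := hn i hi
    have : γ • x.1 i = z.1 i := (key (n - i) i (by omega)).symm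
    simpa [this] using hts i
end

section
/- Let Γ be a countable group acting freely on a countably infinite set T, let X be a measurable space whose σ-algebra is countably generated and separates points, and let μ be a probability measure on X with μ({x}) = 0 for every x ∈ X. Let μ^T be the infinite product probability measure on ∏_{t∈T} X and let Γ act on ∏_{t∈T} X by the shift (γ • κ)(t) = κ(γ⁻¹ • t). Then the set of points with nontrivial stabilizer, { κ ∈ ∏_{t∈T} X : ∃ γ ≠ 1 with γ • κ = κ }, has μ^T-measure zero; i.e., the shift action is essentially free with respect to μ^T. -/
open MeasureTheory

/-- Let a countable group `Γ` act freely on a countably infinite set `T`,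
let `X` be a measurable space whose σ-algebra is countably generated and separates points,
let `μ` be a probability measure on `X` vanishing on singletons, and let `μT` be the
infinite product probability measure on `∏_{t ∈ T} X` (characterized by its values on
finite cylinders). Then the set of points with nontrivial stabilizer under the shift
action `(γ • κ) t = κ (γ⁻¹ • t)` is `μT`-null: the shift action is essentially free. -/
theorem stmt8 {Γ T X : Type*} [Group Γ] [Countable Γ] [MulAction Γ T]
    [Countable T] [Infinite T] [MeasurableSpace X]
    [MeasurableSpace.CountablyGenerated X] [MeasurableSpace.SeparatesPoints X]
    (hfree : ∀ (γ : Γ) (t : T), γ • t = t → γ = 1)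
    (μ : Measure X) [IsProbabilityMeasure μ]
    (hatom : ∀ x : X, μ {x} = 0)
    (μT : Measure (T → X)) [IsProbabilityMeasure μT]
    (hμT : ∀ (s : Finset T) (A : T → Set X), (∀ t ∈ s, MeasurableSet (A t)) →
      μT {κ : T → X | ∀ t ∈ s, κ t ∈ A t} = ∏ t ∈ s, μ (A t)) :
    μT {κ : T → X | ∃ γ : Γ, γ ≠ 1 ∧ (fun t => κ (γ⁻¹ • t)) = κ} = 0 := by
  classical
  -- a countable separating family of measurable sets
  obtain ⟨S, hSm, hSsep⟩ :=
    exists_seq_separating X MeasurableSet.empty (Set.univ : Set X)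
  -- the diagonal is measurable
  set D : Set (X × X) := {p | p.1 = p.2} with hDdef
  have hD : MeasurableSet D := by
    have heq : D = ⋂ n, ((S n) ×ˢ (S n)) ∪ ((S n)ᶜ ×ˢ (S n)ᶜ) := by
      ext ⟨x, y⟩
      simp only [hDdef, Set.mem_iInter, Set.mem_setOf_eq, Set.mem_union, Set.mem_prod,
        Set.mem_compl_iff]
      constructor
      · rintro rfl n; tauto
      · intro h
        refine hSsep x trivial y trivial fun n => ?_
        specialize h n; tauto
    rw [heq]
    exact MeasurableSet.iInter fun n =>
      ((hSm n).prod (hSm n)).union (((hSm n).compl).prod ((hSm n).compl))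
  -- the diagonal is null for the product measure
  have hDnull : (μ.prod μ) D = 0 := by
    rw [Measure.prod_apply hD]
    have hpre : ∀ x : X, (Prod.mk x ⁻¹' D) = {x} := by
      intro x; ext y
      simp [hDdef, eq_comm]
    simp only [hpre, hatom]
    simp
  -- the two-point cylinder computation
  have hpair : ∀ (s t : T), s ≠ t → ∀ A B : Set X, MeasurableSet A → MeasurableSet B →
      μT {κ : T → X | κ s ∈ A ∧ κ t ∈ B} = μ A * μ B := by
    intro s t hst A B hA hB
    have h := hμT {s, t} (fun u => if u = s then A else B) ?_
    · rw [Finset.prod_pair hst] at h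
      simp only [if_pos rfl, if_true, if_neg (Ne.symm hst)] at h
      rw [← h]
      congr 1
      ext κ
      constructor
      · intro hκ u hu
        rcases Finset.mem_insert.mp hu with rfl | hu
        · simpa using hκ.1
        · rw [Finset.mem_singleton] at hu; subst hu
          simpa [Ne.symm hst] using hκ.2
      · intro hκ
        refine ⟨?_, ?_⟩
        · have := hκ s (by simp); simpa using this
        · have := hκ t (by simp); simpa [Ne.symm hst] using this
    · intro u _
      by_cases h : u = s <;> simp [h, hA, hB]
  -- pushforward of μT under evaluation at two distinct points is the product measure
  have hmap : ∀ (s t : T), s ≠ t →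
      Measure.map (fun κ : T → X => (κ s, κ t)) μT = μ.prod μ := by
    intro s t hst
    have hmeas : Measurable fun κ : T → X => (κ s, κ t) :=
      (measurable_pi_apply s).prodMk (measurable_pi_apply t)
    haveI : IsProbabilityMeasure (Measure.map (fun κ : T → X => (κ s, κ t)) μT) :=
      Measure.isProbabilityMeasure_map hmeas.aemeasurable
    refine (Measure.prod_eq fun A B hA hB => ?_).symm
    rw [Measure.map_apply hmeas (hA.prod hB)]
    have : (fun κ : T → X => (κ s, κ t)) ⁻¹' (A ×ˢ B) = {κ : T → X | κ s ∈ A ∧ κ t ∈ B} := by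
      ext κ; simp [Set.mem_prod]
    rw [this, hpair s t hst A B hA hB]
  -- each nontrivial γ contributes a null set
  have hγnull : ∀ γ : Γ, γ ≠ 1 →
      μT {κ : T → X | (fun t => κ (γ⁻¹ • t)) = κ} = 0 := by
    intro γ hγ
    have : Nonempty T := inferInstance
    obtain ⟨t₀⟩ := this
    have hst : γ⁻¹ • t₀ ≠ t₀ := by
      intro h
      exact hγ (by simpa using inv_eq_one.mp (hfree γ⁻¹ t₀ h))
    have hsub : {κ : T → X | (fun t => κ (γ⁻¹ • t)) = κ} ⊆
        (fun κ : T → X => (κ (γ⁻¹ • t₀), κ t₀)) ⁻¹' D := by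
      intro κ hκ
      have := congrFun hκ t₀
      simpa [hDdef] using this
    refine measure_mono_null hsub ?_
    have hmeas : Measurable fun κ : T → X => (κ (γ⁻¹ • t₀), κ t₀) :=
      (measurable_pi_apply _).prodMk (measurable_pi_apply _)
    rw [← Measure.map_apply hmeas hD, hmap _ _ hst, hDnull]
  -- conclude via countable union
  have hunion : {κ : T → X | ∃ γ : Γ, γ ≠ 1 ∧ (fun t => κ (γ⁻¹ • t)) = κ} =
      ⋃ γ : Γ, {κ : T → X | γ ≠ 1 ∧ (fun t => κ (γ⁻¹ • t)) = κ} := by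
    ext κ; simp [Set.mem_iUnion]
  rw [hunion]
  refine measure_iUnion_null fun γ => ?_
  by_cases hγ : γ = 1
  · subst hγ; simp
  · refine measure_mono_null (fun κ hκ => hκ.2) (hγnull γ hγ)
end
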